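/- Let μ be a probability measure on ℝ whose cumulative distribution function G is continuous, and define the LP score functions T_j(x;G) = Leg_j(G(x)). Then the T_j are orthonormal in L²(μ): ∫ T_j(x;G) T_k(x;G) dμ(x) = 0 for j ≠ k, ∫ T_j(x;G)² dμ(x) = 1 for every j, and ∫ T_j(x;G) dμ(x) = 0 for every j ≥ 1. -/

import Mathlib

/-!
Since `G` is continuous, it pushes `μ` forward to the uniform distribution on `[0, 1]`: for
`0 < t < 1` the set `{G ≤ t}` is a closed half-line `(-∞, a]` with `G a = t`, by the intermediate
value theorem. Hence `∫ f (G x) dμ = ∫₀¹ f`, and the claim reduces to the orthonormality of the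
`Leg n` in `L²[0, 1]`. That follows from Rodrigues' formula: the derivatives of `(u² - u)ⁿ` of
order `< n` vanish at `0` and `1`, so `n` integrations by parts annihilate every polynomial of
degree `< n` and reduce the norm to the beta integral `∫₀¹ uⁿ (1 - u)ⁿ du = n!² / (2n + 1)!`.
The mean-zero statement is the case `k = 0`, since `Leg 0 = 1`.
-/

open MeasureTheory

/-- Shifted Legendre polynomial via the Rodrigues formula. -/
noncomputable def shiftedLegendre (n : ℕ) (u : ℝ) : ℝ :=
  (1 / n.factorial : ℝ) * iteratedDeriv n (fun x : ℝ => (x ^ 2 - x) ^ n) u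

/-- Normalized shifted Legendre polynomial `Leg n u = √(2n+1) · P n u`. -/
noncomputable def Leg (n : ℕ) (u : ℝ) : ℝ :=
  Real.sqrt (2 * n + 1) * shiftedLegendre n u

/-- LP score function of order `j` associated with a distribution function `G`. -/
noncomputable def lpScore (G : ℝ → ℝ) (j : ℕ) (x : ℝ) : ℝ := Leg j (G x)

open Polynomial
open scoped Nat

namespace Polynomial

theorem eval_iterate_derivative_eq_zero_of_pow_dvd {R : Type*} [CommRing R] {q : R[X]} {t : R} {n k : ℕ}
    (hq : (X - C t) ^ n ∣ q) (hk : k < n) : (derivative^[k] q).eval t = 0 := by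
  obtain ⟨r, hr⟩ := pow_sub_dvd_iterate_derivative_of_pow_dvd k hq
  simp [hr, zero_pow (Nat.sub_ne_zero_of_lt hk)]

theorem iterate_derivative_natDegree {R : Type*} [Semiring R] (p : R[X]) :
    derivative^[p.natDegree] p = C ((p.natDegree ! : R) * p.leadingCoeff) := by
  rw [eq_C_of_natDegree_le_zero ((natDegree_iterate_derivative _ _).trans (by simp)),
    coeff_iterate_derivative, zero_add, Nat.descFactorial_self, nsmul_eq_mul, leadingCoeff]

theorem iteratedDeriv_eval {𝕜 : Type*} [NontriviallyNormedField 𝕜] (p : 𝕜[X]) (k : ℕ) :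
    iteratedDeriv k (fun x => p.eval x) = fun x => (derivative^[k] p).eval x := by
  induction k with
  | zero => simp
  | succ k ih =>
    ext x
    rw [iteratedDeriv_succ, ih, Function.iterate_succ_apply', Polynomial.deriv]

theorem integral_eval_mul_iterate_derivative {a b : ℝ} (p q : ℝ[X]) (m : ℕ)
    (hq : ∀ k < m, (derivative^[k] q).eval a = 0 ∧ (derivative^[k] q).eval b = 0) :
    ∫ x in a..b, p.eval x * (derivative^[m] q).eval x
      = (-1) ^ m * ∫ x in a..b, (derivative^[m] p).eval x * q.eval x := by
  induction m generalizing p with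
  | zero => simp
  | succ m ih =>
    have parts := intervalIntegral.integral_mul_deriv_eq_deriv_mul (a := a) (b := b)
      (fun x _ => p.hasDerivAt x) (fun x _ => (derivative^[m] q).hasDerivAt x)
      ((derivative p).continuous.intervalIntegrable _ _)
      ((derivative (derivative^[m] q)).continuous.intervalIntegrable _ _)
    obtain ⟨ha, hb⟩ := hq m m.lt_succ_self
    rw [Function.iterate_succ_apply', parts, ha, hb,
      ih (derivative p) fun k hk => hq k (hk.trans m.lt_succ_self), ← Function.iterate_succ_apply]
    ring

end Polynomial

theorem integral_pow_mul_one_sub_pow (m n : ℕ) :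
    ∫ x in (0 : ℝ)..1, x ^ m * (1 - x) ^ n = (m ! * n ! : ℝ) / (m + n + 1)! := by
  induction n generalizing m with
  | zero =>
    simp only [pow_zero, mul_one, integral_pow, add_zero, Nat.factorial_succ]
    push_cast
    field_simp
    simp
  | succ n ih =>
    have parts := intervalIntegral.integral_mul_deriv_eq_deriv_mul
      (u := fun x : ℝ => (1 - x) ^ (n + 1)) (v := fun x : ℝ => x ^ (m + 1) / (m + 1))
      (u' := fun x => -((n + 1 : ℝ) * (1 - x) ^ n)) (v' := fun x => x ^ m)
      (a := 0) (b := 1)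
      (fun x _ => by
        convert ((hasDerivAt_id' x).const_sub 1).fun_pow (n + 1) using 1; push_cast; ring)
      (fun x _ => by
        convert (hasDerivAt_pow (m + 1) x).div_const ((m : ℝ) + 1) using 1
        push_cast [Nat.add_sub_cancel]
        field_simp)
      (Continuous.intervalIntegrable (by fun_prop) _ _)
      (Continuous.intervalIntegrable (by fun_prop) _ _)
    calc ∫ x in (0 : ℝ)..1, x ^ m * (1 - x) ^ (n + 1)
        = ∫ x in (0 : ℝ)..1, (1 - x) ^ (n + 1) * x ^ m := by simp only [mul_comm]
      _ = (n + 1) / (m + 1) * ∫ x in (0 : ℝ)..1, x ^ (m + 1) * (1 - x) ^ n := by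
        rw [parts, ← intervalIntegral.integral_const_mul]
        simp only [sub_self, one_pow, zero_pow (Nat.succ_ne_zero _), zero_mul, zero_div,
          mul_zero, sub_zero, zero_sub, ← intervalIntegral.integral_neg]
        congr 1 with x
        ring
      _ = (m ! * (n + 1)! : ℝ) / (m + (n + 1) + 1)! := by
        rw [ih, show m + 1 + n + 1 = m + (n + 1) + 1 by ring]
        push_cast [Nat.factorial_succ]
        field_simp

noncomputable def rodriguesPoly (n : ℕ) : ℝ[X] := X ^ n * (X - C 1) ^ n

noncomputable def shiftedLegendrePoly (n : ℕ) : ℝ[X] :=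
  C (n ! : ℝ)⁻¹ * derivative^[n] (rodriguesPoly n)

theorem eval_iterate_derivative_rodriguesPoly {n k : ℕ} (hk : k < n) :
    (derivative^[k] (rodriguesPoly n)).eval 0 = 0 ∧
      (derivative^[k] (rodriguesPoly n)).eval 1 = 0 :=
  ⟨eval_iterate_derivative_eq_zero_of_pow_dvd (by rw [C_0, sub_zero]; exact dvd_mul_right _ _) hk,
    eval_iterate_derivative_eq_zero_of_pow_dvd (dvd_mul_left _ _) hk⟩

theorem monic_rodriguesPoly (n : ℕ) : (rodriguesPoly n).Monic :=
  (monic_X_pow n).mul ((monic_X_sub_C 1).pow n)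

theorem natDegree_rodriguesPoly (n : ℕ) : (rodriguesPoly n).natDegree = 2 * n := by
  rw [rodriguesPoly, (monic_X_pow n).natDegree_mul ((monic_X_sub_C 1).pow n), natDegree_X_pow,
    natDegree_pow, natDegree_X_sub_C]
  ring

theorem natDegree_shiftedLegendrePoly_le (n : ℕ) : (shiftedLegendrePoly n).natDegree ≤ n :=
  (natDegree_C_mul_le _ _).trans <| (natDegree_iterate_derivative _ _).trans <| by
    rw [natDegree_rodriguesPoly]; omega

theorem iterate_derivative_shiftedLegendrePoly (n : ℕ) :
    derivative^[n] (shiftedLegendrePoly n) = C ((2 * n)! / n ! : ℝ) := by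
  have top := iterate_derivative_natDegree (rodriguesPoly n)
  rw [natDegree_rodriguesPoly, (monic_rodriguesPoly n).leadingCoeff, mul_one] at top
  rw [shiftedLegendrePoly, iterate_derivative_C_mul, ← Function.iterate_add_apply, ← two_mul, top,
    ← C_mul, inv_mul_eq_div]

theorem shiftedLegendre_eq_eval (n : ℕ) (u : ℝ) :
    shiftedLegendre n u = (shiftedLegendrePoly n).eval u := by
  have rodrigues : (fun x : ℝ => (x ^ 2 - x) ^ n) = fun x => (rodriguesPoly n).eval x := by
    ext x
    simp only [rodriguesPoly, eval_mul, eval_pow, eval_X, eval_sub, eval_C, ← mul_pow]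
    ring
  rw [_root_.shiftedLegendre, rodrigues, iteratedDeriv_eval, shiftedLegendrePoly, eval_mul, eval_C,
    one_div]

theorem integral_rodriguesPoly (n : ℕ) :
    ∫ x in (0 : ℝ)..1, (rodriguesPoly n).eval x = (-1) ^ n * ((n ! : ℝ) ^ 2 / (2 * n + 1)!) := by
  have sign (x : ℝ) : (rodriguesPoly n).eval x = (-1) ^ n * (x ^ n * (1 - x) ^ n) := by
    simp only [rodriguesPoly, eval_mul, eval_pow, eval_X, eval_sub, eval_C]
    rw [← mul_pow, ← mul_pow, ← mul_pow]
    ring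
  simp only [sign, intervalIntegral.integral_const_mul, integral_pow_mul_one_sub_pow, two_mul, sq]

theorem integral_eval_mul_shiftedLegendrePoly_of_natDegree_lt {p : ℝ[X]} {n : ℕ}
    (hp : p.natDegree < n) :
    ∫ x in (0 : ℝ)..1, p.eval x * (shiftedLegendrePoly n).eval x = 0 := by
  simp only [shiftedLegendrePoly, eval_mul, eval_C, mul_left_comm (p.eval _),
    intervalIntegral.integral_const_mul,
    integral_eval_mul_iterate_derivative _ _ n fun k hk => eval_iterate_derivative_rodriguesPoly hk,
    iterate_derivative_eq_zero hp, eval_zero, zero_mul, intervalIntegral.integral_zero, mul_zero]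

theorem integral_shiftedLegendrePoly_mul_self (n : ℕ) :
    ∫ x in (0 : ℝ)..1, (shiftedLegendrePoly n).eval x * (shiftedLegendrePoly n).eval x
      = 1 / (2 * n + 1) := by
  conv_lhs => enter [1, x, 2]; rw [shiftedLegendrePoly, eval_mul, eval_C]
  simp only [mul_left_comm ((shiftedLegendrePoly n).eval _),
    intervalIntegral.integral_const_mul,
    integral_eval_mul_iterate_derivative _ _ n fun k hk => eval_iterate_derivative_rodriguesPoly hk,
    iterate_derivative_shiftedLegendrePoly, eval_C, integral_rodriguesPoly]
  rw [Nat.factorial_succ]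
  push_cast
  field_simp
  rw [← pow_mul, mul_comm, pow_mul, neg_one_sq, one_pow]

theorem integral_shiftedLegendrePoly_mul (j k : ℕ) :
    ∫ x in (0 : ℝ)..1, (shiftedLegendrePoly j).eval x * (shiftedLegendrePoly k).eval x
      = if j = k then (1 / (2 * j + 1) : ℝ) else 0 := by
  rcases lt_trichotomy j k with hjk | rfl | hkj
  · rw [if_neg hjk.ne, integral_eval_mul_shiftedLegendrePoly_of_natDegree_lt
      ((natDegree_shiftedLegendrePoly_le j).trans_lt hjk)]
  · rw [if_pos rfl, integral_shiftedLegendrePoly_mul_self]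
  · simp only [mul_comm ((shiftedLegendrePoly j).eval _), if_neg hkj.ne',
      integral_eval_mul_shiftedLegendrePoly_of_natDegree_lt
        ((natDegree_shiftedLegendrePoly_le k).trans_lt hkj)]

theorem Leg_eq_eval (n : ℕ) (u : ℝ) :
    Leg n u = √(2 * n + 1) * (shiftedLegendrePoly n).eval u := by
  rw [Leg, shiftedLegendre_eq_eval]

theorem continuous_Leg (n : ℕ) : Continuous (Leg n) := by
  simp only [funext (Leg_eq_eval n)]
  fun_prop

theorem Leg_zero (u : ℝ) : Leg 0 u = 1 := by
  simp [Leg_eq_eval, shiftedLegendrePoly, rodriguesPoly]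

theorem integral_Leg_mul_Leg (j k : ℕ) :
    ∫ u in (0 : ℝ)..1, Leg j u * Leg k u = if j = k then 1 else 0 := by
  have factor (u : ℝ) : Leg j u * Leg k u = √(2 * j + 1) * √(2 * k + 1) *
      ((shiftedLegendrePoly j).eval u * (shiftedLegendrePoly k).eval u) := by
    rw [Leg_eq_eval, Leg_eq_eval]; ring
  simp only [factor, intervalIntegral.integral_const_mul, integral_shiftedLegendrePoly_mul]
  split_ifs with hjk
  · subst hjk
    rw [← sq, Real.sq_sqrt (by positivity)]
    field_simp
  · rw [mul_zero]

open ProbabilityTheory Set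

theorem Monotone.exists_preimage_Iic_eq_Iic {α β : Type*} [ConditionallyCompleteLinearOrder α]
    [TopologicalSpace α] [OrderTopology α] [DenselyOrdered α] [LinearOrder β] [TopologicalSpace β]
    [OrderClosedTopology β] {G : α → β} (hmono : Monotone G)
    (hcont : Continuous G) {t : β} (hlo : ∃ x, G x ≤ t) (hhi : ∃ x, t < G x) :
    ∃ a, G ⁻¹' Iic t = Iic a ∧ G a = t := by
  set S := G ⁻¹' Iic t
  have hbdd : BddAbove S := by
    obtain ⟨z, hz⟩ := hhi
    exact ⟨z, fun y hy => hmono.reflect_lt (lt_of_le_of_lt hy hz) |>.le⟩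
  have hS : S = Iic (sSup S) :=
    ((isLowerSet_Iic t).preimage hmono).lowerClosure.symm.trans
      (lowerClosure_eq_Iic_csSup hlo hbdd (isClosed_Iic.preimage hcont))
  refine ⟨sSup S, hS, le_antisymm (hS.ge (mem_Iic.2 le_rfl)) ?_⟩
  obtain ⟨c, rfl⟩ := mem_range_of_exists_le_of_exists_ge hcont hlo (hhi.imp fun _ => le_of_lt)
  exact hmono (hS.le (le_refl (G c)))

theorem map_cdf_eq_volume_restrict (μ : Measure ℝ) [IsProbabilityMeasure μ]
    (hcont : Continuous (cdf μ)) : μ.map (cdf μ) = volume.restrict (Ioc 0 1) := by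
  refine Measure.ext_of_Iic _ _ fun t => ?_
  rw [Measure.map_apply hcont.measurable measurableSet_Iic,
    Measure.restrict_apply measurableSet_Iic, inter_comm, Ioc_inter_Iic, Real.volume_Ioc,
    sub_zero]
  rcases le_or_gt 1 t with ht1 | ht1
  · have : cdf μ ⁻¹' Iic t = univ := eq_univ_of_forall fun x => (cdf_le_one μ x).trans ht1
    rw [this, measure_univ, inf_of_le_left ht1, ENNReal.ofReal_one]
  rw [inf_of_le_right ht1.le]
  by_cases hlo : ∃ x, cdf μ x ≤ t
  · obtain ⟨a, ha, rfl⟩ := (monotone_cdf μ).exists_preimage_Iic_eq_Iic hcont hlo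
      ((tendsto_cdf_atTop μ).eventually (lt_mem_nhds ht1)).exists
    rw [ha, ofReal_cdf]
  · simp only [not_exists, not_le] at hlo
    have : cdf μ ⁻¹' Iic t = ∅ := eq_empty_of_forall_notMem fun x hx => (hlo x).not_ge hx
    rw [this, measure_empty,
      ENNReal.ofReal_of_nonpos (ge_of_tendsto' (tendsto_cdf_atBot μ) fun x => (hlo x).le)]

theorem integral_comp_cdf (μ : Measure ℝ) [IsProbabilityMeasure μ] (hcont : Continuous (cdf μ))
    {f : ℝ → ℝ} (hf : Measurable f) : ∫ x, f (cdf μ x) ∂μ = ∫ u in (0 : ℝ)..1, f u := by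
  rw [← integral_map hcont.measurable.aemeasurable hf.aestronglyMeasurable,
    map_cdf_eq_volume_restrict μ hcont, intervalIntegral.integral_of_le zero_le_one]

/-- The LP score functions `T_j(x;G) = Leg_j(G(x))` are orthonormal in `L²(μ)` and,
for `j ≥ 1`, have mean zero, when `G` is the continuous cdf of `μ`. -/
theorem lpScore_orthonormal
    (μ : Measure ℝ) [IsProbabilityMeasure μ]
    (G : ℝ → ℝ) (hG : ∀ x, G x = (μ (Set.Iic x)).toReal)
    (hGcont : Continuous G) :
    (∀ j k : ℕ, j ≠ k → ∫ x, lpScore G j x * lpScore G k x ∂μ = 0) ∧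
    (∀ j : ℕ, ∫ x, (lpScore G j x) ^ 2 ∂μ = 1) ∧
    (∀ j : ℕ, 1 ≤ j → ∫ x, lpScore G j x ∂μ = 0) := by
  obtain rfl : G = cdf μ := funext fun x => (hG x).trans (cdf_eq_real μ x).symm
  have integral_lpScore_mul (j k : ℕ) :
      ∫ x, lpScore (cdf μ) j x * lpScore (cdf μ) k x ∂μ = if j = k then 1 else 0 :=
    (integral_comp_cdf μ hGcont ((continuous_Leg j).mul (continuous_Leg k)).measurable).trans
      (integral_Leg_mul_Leg j k)
  refine ⟨fun j k hjk => ?_, fun j => ?_, fun j hj => ?_⟩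
  · simpa [hjk] using integral_lpScore_mul j k
  · simpa [sq] using integral_lpScore_mul j j
  · simpa [lpScore, Leg_zero, Nat.one_le_iff_ne_zero.mp hj] using integral_lpScore_mul j 0
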